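/- Let r ≥ 0. There exist constants ε₀ > 0 and C > 0, depending only on r, σ₁, σ₂, such that for every μ ∈ ℂ with Im μ > −r satisfying γ₁(μ) ≤ ε₀ and γ₂(μ) ≤ ε₀: if (v₁,v₂) is a solution of the Dirac system with parameter μ satisfying v₁(0) = 0 and v₂(1) = 1, then v₂(0) ≠ 0 and |e^{iμ}/v₂(0) − 1 − (K₂e)(0)| ≤ C γ̃(μ). -/

import Mathlib

open MeasureTheory Set
open scoped ENNReal

noncomputable section

/-- The integral operator `K₁` associated with the Dirac system. -/
def K1 (σ₁ σ₂ : ℝ → ℂ) (μ : ℂ) (z : ℝ → ℂ) : ℝ → ℂ := fun x =>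
  ∫ t in (0:ℝ)..x, σ₁ t * ∫ s in t..(1:ℝ),
    Complex.exp (2 * Complex.I * μ * (s - t)) * σ₂ s * z s

/-- The integral operator `K₂` associated with the Dirac system. -/
def K2 (σ₁ σ₂ : ℝ → ℂ) (μ : ℂ) (z : ℝ → ℂ) : ℝ → ℂ := fun x =>
  ∫ t in x..(1:ℝ), σ₂ t * ∫ s in (0:ℝ)..t,
    Complex.exp (2 * Complex.I * μ * (t - s)) * σ₁ s * z s

/-- `γ₀₁(x,μ) = |∫₀ˣ e^{2iμ(x−t)} σ₁(t) dt|`. -/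
def gamma01 (σ₁ : ℝ → ℂ) (μ : ℂ) (x : ℝ) : ℝ :=
  ‖∫ t in (0:ℝ)..x, Complex.exp (2 * Complex.I * μ * (x - t)) * σ₁ t‖

/-- `γ₀₂(x,μ) = |∫ₓ¹ e^{2iμ(t−x)} σ₂(t) dt|`. -/
def gamma02 (σ₂ : ℝ → ℂ) (μ : ℂ) (x : ℝ) : ℝ :=
  ‖∫ t in x..(1:ℝ), Complex.exp (2 * Complex.I * μ * (t - x)) * σ₂ t‖

/-- `γ₁(μ) = ‖γ₀₁(·,μ)‖_{L^q[0,1]}`. -/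
def gamma1 (σ₁ : ℝ → ℂ) (q : ℝ≥0∞) (μ : ℂ) : ℝ :=
  (eLpNorm (fun x => gamma01 σ₁ μ x) q (volume.restrict (Icc (0:ℝ) 1))).toReal

/-- `γ₂(μ) = ‖γ₀₂(·,μ)‖_{L^q[0,1]}`. -/
def gamma2 (σ₂ : ℝ → ℂ) (q : ℝ≥0∞) (μ : ℂ) : ℝ :=
  (eLpNorm (fun x => gamma02 σ₂ μ x) q (volume.restrict (Icc (0:ℝ) 1))).toReal

/-- `γ̃(μ) = ∫₀¹ |σ₂| γ₀₁² + ∫₀¹ |σ₁| γ₀₂²`. -/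
def gammaT (σ₁ σ₂ : ℝ → ℂ) (μ : ℂ) : ℝ :=
  (∫ s in (0:ℝ)..1, ‖σ₂ s‖ * (gamma01 σ₁ μ s) ^ 2)
    + ∫ s in (0:ℝ)..1, ‖σ₁ s‖ * (gamma02 σ₂ μ s) ^ 2

/-- `‖σ‖_{L^p[0,1]}` where `σ(x) = max(|σ₁(x)|,|σ₂(x)|)`. -/
def sigmaNorm (σ₁ σ₂ : ℝ → ℂ) (p : ℝ≥0∞) : ℝ :=
  (eLpNorm (fun x => max ‖σ₁ x‖ ‖σ₂ x‖) p (volume.restrict (Icc (0:ℝ) 1))).toReal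

/-- The constant function `1` on `[0,1]`. -/
def eFun : ℝ → ℂ := fun _ => 1

/-- A solution of the Dirac system `y₁' + σ₁ y₂ = iμ y₁`, `y₂' + σ₂ y₁ = −iμ y₂` on `[0,1]`,
with `y₁, y₂` absolutely continuous (i.e. in `W^{1,1}[0,1]`, so each is the indefinite
integral of an integrable function, and the equations hold a.e. with those derivatives). -/
def IsDiracSolution (σ₁ σ₂ : ℝ → ℂ) (μ : ℂ) (y₁ y₂ : ℝ → ℂ) : Prop :=
  ∃ g₁ g₂ : ℝ → ℂ,
    IntervalIntegrable g₁ volume 0 1 ∧ IntervalIntegrable g₂ volume 0 1 ∧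
    (∀ x ∈ Icc (0:ℝ) 1, y₁ x = y₁ 0 + ∫ t in (0:ℝ)..x, g₁ t) ∧
    (∀ x ∈ Icc (0:ℝ) 1, y₂ x = y₂ 0 + ∫ t in (0:ℝ)..x, g₂ t) ∧
    (∀ᵐ x ∂(volume.restrict (Icc (0:ℝ) 1)),
      g₁ x + σ₁ x * y₂ x = Complex.I * μ * y₁ x) ∧
    (∀ᵐ x ∂(volume.restrict (Icc (0:ℝ) 1)),
      g₂ x + σ₂ x * y₁ x = -(Complex.I * μ) * y₂ x)

/-!
With `w(x) = e^{iμx} v₂(x)`, variation of constants turns the Dirac system with `v₁(0) = 0` into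
`w + K₂ w = w(1) = e^{iμ}`; so `z = e^{-iμ} w` solves `z + K₂ z = e`, and
`e^{iμ} / v₂(0) = 1 / z(0)`.

Let `ρ = z - 1`, `M = max |ρ|` and `A = ∫₀¹ |σ₂| γ₀₁`. The inner integral of `K₂ ρ` is
`∫₀ᵗ e^{2iμ(t-s)} σ₁(s) ρ(s) ds`; writing `ρ(s) = ρ(t) - ∫ₛᵗ σ₂ (…)` and exchanging the order of
integration, the kernel integrates to `e^{2iμ(t-τ)}` times the inner integral of `K₂ e`, whose
modulus is `γ₀₁(τ)`. So the inner integral of `K₂ ρ` is at most `γ₀₁(t) M + O(∫₀¹ |σ₂| γ₀₁² + A M)`.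
This gives `M ≤ Q A (1 + M)` for a constant `Q = Q(r, σ₁, σ₂)`, hence `M ≤ 2 Q A` once `Q A ≤ 1/4`
(Hölder gives `A ≤ ‖σ₂‖_p γ₁(μ)`, which fixes `ε₀`), and then `|(K₂ ρ)(0)| ≲ A² + ∫₀¹ |σ₂| γ₀₁²`.
Finally `1/z(0) - 1 - (K₂ e)(0) = ((K₂ ρ)(0) - ρ(0) (K₂ e)(0)) / z(0)`, and Cauchy–Schwarz gives
`A² ≤ ‖σ₂‖₁ ∫₀¹ |σ₂| γ₀₁² ≤ ‖σ₂‖₁ γ̃(μ)`.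
-/

theorem integral_mul_integral_swap_of_le {f g : ℝ → ℂ} {a b : ℝ} (hab : a ≤ b)
    (hf : IntegrableOn f (Ioc a b)) (hg : IntegrableOn g (Ioc a b)) :
    ∫ s in a..b, f s * ∫ τ in s..b, g τ = ∫ τ in a..b, (∫ s in a..τ, f s) * g τ := by
  set T := {p : ℝ × ℝ | p.1 < p.2}
  have hint : Integrable (T.indicator fun p => f p.1 * g p.2)
      ((volume.restrict (Ioc a b)).prod (volume.restrict (Ioc a b))) :=
    (hf.mul_prod hg).indicator (measurableSet_lt measurable_fst measurable_snd)
  have key := integral_integral_swap (f := fun s τ => T.indicator (fun p => f p.1 * g p.2) (s, τ))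
    hint
  rw [intervalIntegral.integral_of_le hab, intervalIntegral.integral_of_le hab]
  convert key using 1 <;> refine setIntegral_congr_fun measurableSet_Ioc fun x hx => ?_
  · have hrow : (fun τ => T.indicator (fun p => f p.1 * g p.2) (x, τ))
        = (Ioi x).indicator fun τ => f x * g τ := by
      ext τ; simp [T, indicator_apply]
    rw [hrow, integral_indicator measurableSet_Ioi, Measure.restrict_restrict measurableSet_Ioi,
      show Ioi x ∩ Ioc a b = Ioc x b by ext; simp only [mem_inter_iff, mem_Ioi, mem_Ioc]; grind,
      intervalIntegral.integral_of_le hx.2,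
      integral_const_mul]
  · have hcol : (fun s => T.indicator (fun p => f p.1 * g p.2) (s, x))
        = (Iio x).indicator fun s => f s * g x := by
      ext s; simp [T, indicator_apply]
    rw [hcol, integral_indicator measurableSet_Iio, Measure.restrict_restrict measurableSet_Iio,
      show Iio x ∩ Ioc a b = Ioo a x by
        ext; simp only [mem_inter_iff, mem_Iio, mem_Ioc, mem_Ioo]; grind,
      intervalIntegral.integral_of_le hx.1.le,
      integral_mul_const, integral_Ioc_eq_integral_Ioo]

theorem norm_integral_le_integral_of_subinterval {E : Type*} [NormedAddCommGroup E]
    [NormedSpace ℝ E] {f : ℝ → E} {g : ℝ → ℝ} {a b x y : ℝ}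
    (hax : a ≤ x) (hxy : x ≤ y) (hyb : y ≤ b) (hg : IntervalIntegrable g volume a b)
    (hg₀ : ∀ t ∈ Ioc a b, 0 ≤ g t) (hfg : ∀ t ∈ Ioc x y, ‖f t‖ ≤ g t) :
    ‖∫ t in x..y, f t‖ ≤ ∫ t in a..b, g t := by
  have hsub : uIcc x y ⊆ uIcc a b := by
    rw [uIcc_of_le hxy, uIcc_of_le (hax.trans (hxy.trans hyb))]
    exact Icc_subset_Icc hax hyb
  exact (intervalIntegral.norm_integral_le_of_norm_le hxy (ae_of_all _ hfg)
    (hg.mono_set hsub)).trans (intervalIntegral.integral_mono_interval hax hxy hyb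
      ((ae_restrict_iff' measurableSet_Ioc).mpr (ae_of_all _ hg₀)) hg)

theorem IntervalIntegrable.mul_continuousOn_of_mem {A : Type*} [NormedRing A] {f g : ℝ → A}
    {a b x y : ℝ} (hab : a ≤ b)
    (hf : IntervalIntegrable f volume a b) (hg : ContinuousOn g (Icc a b))
    (hx : x ∈ Icc a b) (hy : y ∈ Icc a b) :
    IntervalIntegrable (fun t => f t * g t) volume x y :=
  (hf.mono_set (uIcc_of_le hab ▸ uIcc_subset_Icc hx hy)).mul_continuousOn
    (hg.mono (uIcc_subset_Icc hx hy))

theorem integral_norm_mul_norm_le_eLpNorm_mul_eLpNorm {α E F : Type*} [MeasurableSpace α]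
    {ν : Measure α} [NormedAddCommGroup E] [NormedAddCommGroup F] {p q : ℝ≥0∞}
    [p.HolderConjugate q] {f : α → E} {g : α → F} (hf : MemLp f p ν) (hg : MemLp g q ν) :
    ∫ x, ‖f x‖ * ‖g x‖ ∂ν ≤ (eLpNorm f p ν).toReal * (eLpNorm g q ν).toReal := by
  have hholder : eLpNorm (fun x => ‖f x‖ * ‖g x‖) 1 ν ≤ eLpNorm f p ν * eLpNorm g q ν := by
    simpa using eLpNorm_le_eLpNorm_mul_eLpNorm'_of_norm (r := 1) hf.1 hg.1
      (fun a b => ‖a‖ * ‖b‖) 1 (ae_of_all _ fun x => by simp)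
  have hnorm : ∫ x, ‖f x‖ * ‖g x‖ ∂ν = ∫ x, ‖‖f x‖ * ‖g x‖‖ ∂ν := by simp
  have hmeas : AEStronglyMeasurable (fun x => ‖f x‖ * ‖g x‖) ν := hf.1.norm.mul hg.1.norm
  rw [hnorm, integral_norm_eq_lintegral_enorm hmeas,
    ← eLpNorm_one_eq_lintegral_enorm, ← ENNReal.toReal_mul]
  exact ENNReal.toReal_mono (ENNReal.mul_ne_top hf.eLpNorm_ne_top hg.eLpNorm_ne_top) hholder

theorem sq_integral_mul_le_integral_mul_integral_mul_sq {α : Type*} [MeasurableSpace α]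
    {ν : Measure α} {w g : α → ℝ} (hw : 0 ≤ᵐ[ν] w) (hw_int : Integrable w ν)
    (hwg : Integrable (fun x => w x * g x) ν) (hwg2 : Integrable (fun x => w x * g x ^ 2) ν) :
    (∫ x, w x * g x ∂ν) ^ 2 ≤ (∫ x, w x ∂ν) * ∫ x, w x * g x ^ 2 ∂ν := by
  have hquad : ∀ c : ℝ, 0 ≤ (∫ x, w x ∂ν) * (c * c) + (-2 * ∫ x, w x * g x ∂ν) * c
      + ∫ x, w x * g x ^ 2 ∂ν := fun c => by
    have hexp : ∀ x, w x * (c - g x) ^ 2 = c * c * w x + (-2 * c) * (w x * g x) + w x * g x ^ 2 :=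
      fun x => by ring
    have := integral_nonneg_of_ae (μ := ν) (f := fun x => w x * (c - g x) ^ 2)
      (hw.mono fun x hx => mul_nonneg hx (sq_nonneg _))
    simp_rw [hexp] at this
    rw [integral_add (f := fun x => c * c * w x + -2 * c * (w x * g x))
        ((hw_int.const_mul _).add (hwg.const_mul _)) hwg2,
      integral_add (hw_int.const_mul _) (hwg.const_mul _), integral_const_mul,
      integral_const_mul] at this
    linarith
  have := discrim_le_zero hquad
  rw [discrim] at this
  linarith

theorem integral_const_mul_cexp (l : ℂ) (a b : ℝ) :
    ∫ t in a..b, l * Complex.exp (l * t) = Complex.exp (l * b) - Complex.exp (l * a) := by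
  rcases eq_or_ne l 0 with rfl | hl
  · simp
  rw [intervalIntegral.integral_const_mul, integral_exp_mul_complex hl]
  field_simp

theorem cexp_mul_add_integral {g : ℝ → ℂ} {x : ℝ} (hx : 0 ≤ x)
    (hg : IntervalIntegrable g volume 0 x) (c l : ℂ) :
    Complex.exp (l * x) * (c + ∫ t in (0:ℝ)..x, g t)
      = c + ∫ t in (0:ℝ)..x, Complex.exp (l * t) * (l * (c + ∫ s in (0:ℝ)..t, g s) + g t) := by
  have hexp : Continuous fun t : ℝ => Complex.exp (l * t) := by fun_prop
  have hexp' : Continuous fun t : ℝ => l * Complex.exp (l * t) := by fun_prop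
  have hprim : ContinuousOn (fun t => ∫ s in (0:ℝ)..t, g s) (uIcc 0 x) :=
    intervalIntegral.continuousOn_primitive_interval' hg left_mem_uIcc
  have hfubini : ∫ t in (0:ℝ)..x, (∫ s in (0:ℝ)..t, g s) * (l * Complex.exp (l * t))
      = (∫ s in (0:ℝ)..x, g s) * Complex.exp (l * x)
        - ∫ s in (0:ℝ)..x, g s * Complex.exp (l * s) := by
    rw [← integral_mul_integral_swap_of_le hx
      ((intervalIntegrable_iff_integrableOn_Ioc_of_le hx).mp hg) hexp'.integrableOn_Ioc,
      ← intervalIntegral.integral_mul_const, ← intervalIntegral.integral_sub (hg.mul_const _)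
        (hg.mul_continuousOn hexp.continuousOn)]
    simp_rw [integral_const_mul_cexp, mul_sub]
  have hsplit : ∀ t : ℝ, Complex.exp (l * t) * (l * (c + ∫ s in (0:ℝ)..t, g s) + g t)
      = c * (l * Complex.exp (l * t)) + ((∫ s in (0:ℝ)..t, g s) * (l * Complex.exp (l * t))
        + Complex.exp (l * t) * g t) := fun t => by ring
  have hi₁ : IntervalIntegrable (fun t : ℝ => (∫ s in (0:ℝ)..t, g s) * (l * Complex.exp (l * t)))
      volume 0 x := (hprim.mul hexp'.continuousOn).intervalIntegrable
  have hi₂ : IntervalIntegrable (fun t : ℝ => Complex.exp (l * t) * g t) volume 0 x :=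
    hg.continuousOn_mul hexp.continuousOn
  simp_rw [hsplit]
  rw [intervalIntegral.integral_add ((hexp'.intervalIntegrable _ _).const_mul c) (hi₁.add hi₂),
    intervalIntegral.integral_add hi₁ hi₂, intervalIntegral.integral_const_mul,
    integral_const_mul_cexp, hfubini]
  simp only [Complex.ofReal_zero, mul_zero, Complex.exp_zero]
  simp_rw [mul_comm (Complex.exp _) (g _)]
  ring

theorem cexp_mul_eq_add_integral_of_ae_eq {F g h : ℝ → ℂ} {l : ℂ}
    (hg : IntervalIntegrable g volume 0 1)
    (hF : ∀ x ∈ Icc (0:ℝ) 1, F x = F 0 + ∫ t in (0:ℝ)..x, g t)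
    (hFg : ∀ᵐ t ∂(volume.restrict (Icc (0:ℝ) 1)), l * F t + g t = h t) {x : ℝ}
    (hx : x ∈ Icc (0:ℝ) 1) :
    Complex.exp (l * x) * F x = F 0 + ∫ t in (0:ℝ)..x, Complex.exp (l * t) * h t := by
  rw [hF x hx, cexp_mul_add_integral hx.1 (hg.mono_set (by
    rw [uIcc_of_le hx.1, uIcc_of_le zero_le_one]; exact Icc_subset_Icc le_rfl hx.2))]
  congr 1
  refine intervalIntegral.integral_congr_ae ?_
  filter_upwards [(ae_restrict_iff' measurableSet_Icc).mp hFg] with t ht htx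
  rw [uIoc_of_le hx.1] at htx
  have htI : t ∈ Icc (0:ℝ) 1 := ⟨htx.1.le, htx.2.trans hx.2⟩
  rw [← hF t htI, ht htI]

theorem one_div_sub_one_sub_eq {K : Type*} [Field K] {z k w : K} (hz : z ≠ 0)
    (h : z + (k + w) = 1) : 1 / z - 1 - k = (w - (z - 1) * k) / z := by
  field_simp
  linear_combination -h

def normIntegral (σ : ℝ → ℂ) : ℝ := ∫ t in (0:ℝ)..1, ‖σ t‖

theorem normIntegral_nonneg (σ : ℝ → ℂ) : 0 ≤ normIntegral σ :=
  intervalIntegral.integral_nonneg zero_le_one fun _ _ => norm_nonneg _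

def volterra (σ : ℝ → ℂ) (μ : ℂ) (φ : ℝ → ℂ) (t : ℝ) : ℂ :=
  ∫ s in (0:ℝ)..t, Complex.exp (2 * Complex.I * μ * (t - s)) * σ s * φ s

section Volterra
variable {σ σ₁ σ₂ φ : ℝ → ℂ} {μ : ℂ} {r : ℝ}

theorem K2_eq_integral_volterra (z : ℝ → ℂ) (x : ℝ) :
    K2 σ₁ σ₂ μ z x = ∫ t in x..(1:ℝ), σ₂ t * volterra σ₁ μ z t := rfl

theorem K2_const_mul (c : ℂ) (z : ℝ → ℂ) (x : ℝ) :
    K2 σ₁ σ₂ μ (fun s => c * z s) x = c * K2 σ₁ σ₂ μ z x := by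
  simp only [K2, ← intervalIntegral.integral_const_mul]
  refine intervalIntegral.integral_congr fun t _ => ?_
  simp only [mul_left_comm c]

theorem norm_volterra_eFun (x : ℝ) : ‖volterra σ μ eFun x‖ = gamma01 σ μ x := by
  simp [volterra, gamma01, eFun]

theorem norm_cexp_two_mul_I_mul_le (hr : 0 ≤ r) (hμ : -r < μ.im) {s t : ℝ} (hs : 0 ≤ s)
    (hst : s ≤ t) (ht : t ≤ 1) :
    ‖Complex.exp (2 * Complex.I * μ * (t - s))‖ ≤ Real.exp (2 * r) := by
  rw [Complex.norm_exp, Real.exp_le_exp]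
  have hre : (2 * Complex.I * μ * (t - s)).re = -2 * μ.im * (t - s) := by simp [Complex.mul_re]
  rw [hre]
  nlinarith

theorem integral_cexp_kernel (f : ℝ → ℂ) (t u a b : ℝ) :
    ∫ s in a..b, Complex.exp (2 * Complex.I * μ * (t - s)) * f s
      = Complex.exp (2 * Complex.I * μ * (t - u)) *
          ∫ s in a..b, Complex.exp (2 * Complex.I * μ * (u - s)) * f s := by
  rw [← intervalIntegral.integral_const_mul]
  refine intervalIntegral.integral_congr fun s _ => ?_
  rw [← mul_assoc, ← Complex.exp_add]
  ring_nf

theorem continuousOn_volterra (hσφ : IntervalIntegrable (fun s => σ s * φ s) volume 0 1) :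
    ContinuousOn (volterra σ μ φ) (Icc 0 1) := by
  have hfactor : volterra σ μ φ = fun t : ℝ => Complex.exp (2 * Complex.I * μ * (t - 0)) *
      ∫ s in (0:ℝ)..t, Complex.exp (2 * Complex.I * μ * (0 - s)) * (σ s * φ s) := by
    ext t
    simp only [volterra, mul_assoc (Complex.exp _) (σ _) (φ _)]
    rw [integral_cexp_kernel _ t 0, Complex.ofReal_zero]
  rw [hfactor, ← uIcc_of_le zero_le_one]
  exact (by fun_prop : Continuous fun t : ℝ =>
    Complex.exp (2 * Complex.I * μ * (t - 0))).continuousOn.mul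
    (intervalIntegral.continuousOn_primitive_interval'
      (hσφ.continuousOn_mul (by fun_prop : Continuous fun s : ℝ =>
        Complex.exp (2 * Complex.I * μ * (0 - s))).continuousOn) left_mem_uIcc)

theorem continuousOn_volterra_of_continuousOn (hσ : IntervalIntegrable σ volume 0 1)
    (hφ : ContinuousOn φ (Icc 0 1)) : ContinuousOn (volterra σ μ φ) (Icc 0 1) :=
  continuousOn_volterra (hσ.mul_continuousOn_of_mem zero_le_one hφ (left_mem_Icc.2 zero_le_one)
    (right_mem_Icc.2 zero_le_one))

theorem intervalIntegrable_volterra_integrand (hσ : IntervalIntegrable σ volume 0 1)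
    (hφ : ContinuousOn φ (Icc 0 1)) {t : ℝ} (ht : t ∈ Icc (0:ℝ) 1) (u : ℝ) :
    IntervalIntegrable (fun s => Complex.exp (2 * Complex.I * μ * (u - s)) * σ s * φ s)
      volume 0 t := by
  have hexp : Continuous fun s : ℝ => Complex.exp (2 * Complex.I * μ * (u - s)) := by fun_prop
  exact ((hσ.mul_continuousOn_of_mem zero_le_one hφ (left_mem_Icc.2 zero_le_one) ht
    ).mul_continuousOn hexp.continuousOn).congr fun s _ => by ring

theorem norm_volterra_le (hσ : IntervalIntegrable σ volume 0 1) (hr : 0 ≤ r) (hμ : -r < μ.im)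
    {t M : ℝ} (ht : t ∈ Icc (0:ℝ) 1) (hM : 0 ≤ M) (hφ : ∀ s ∈ Ioc 0 t, ‖φ s‖ ≤ M) :
    ‖volterra σ μ φ t‖ ≤ Real.exp (2 * r) * normIntegral σ * M := by
  refine (norm_integral_le_integral_of_subinterval le_rfl ht.1 ht.2
    (hσ.norm.const_mul (Real.exp (2 * r) * M)) (fun s _ => by positivity) fun s hs => ?_).trans
    (by rw [intervalIntegral.integral_const_mul, normIntegral]; ring_nf; rfl)
  rw [norm_mul, norm_mul, mul_right_comm]
  gcongr
  · exact norm_cexp_two_mul_I_mul_le hr hμ hs.1.le hs.2 ht.2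
  · exact hφ s hs

theorem gamma01_le (hσ : IntervalIntegrable σ volume 0 1) (hr : 0 ≤ r) (hμ : -r < μ.im) {t : ℝ}
    (ht : t ∈ Icc (0:ℝ) 1) : gamma01 σ μ t ≤ Real.exp (2 * r) * normIntegral σ := by
  simpa [norm_volterra_eFun] using norm_volterra_le (φ := eFun) hσ hr hμ ht zero_le_one
    (fun _ _ => by simp [eFun])

theorem volterra_integral_eq (hσ : IntervalIntegrable σ volume 0 1) {h : ℝ → ℂ} {t : ℝ}
    (ht : t ∈ Icc (0:ℝ) 1) (hh : IntervalIntegrable h volume 0 t) :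
    volterra σ μ (fun s => ∫ τ in s..t, h τ) t
      = ∫ τ in (0:ℝ)..t, Complex.exp (2 * Complex.I * μ * (t - τ)) *
          volterra σ μ eFun τ * h τ := by
  have hker := intervalIntegrable_volterra_integrand (μ := μ) hσ continuousOn_const ht t
    (φ := eFun)
  simp only [eFun, mul_one] at hker
  rw [volterra, integral_mul_integral_swap_of_le ht.1
    ((intervalIntegrable_iff_integrableOn_Ioc_of_le ht.1).mp hker)
    ((intervalIntegrable_iff_integrableOn_Ioc_of_le ht.1).mp hh)]
  refine intervalIntegral.integral_congr fun τ _ => ?_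
  simp only [volterra, eFun, mul_one]
  rw [integral_cexp_kernel _ t τ]

end Volterra

namespace IsDiracSolution
variable {σ₁ σ₂ : ℝ → ℂ} {μ : ℂ} {v₁ v₂ : ℝ → ℂ}

theorem continuousOn_snd (h : IsDiracSolution σ₁ σ₂ μ v₁ v₂) : ContinuousOn v₂ (Icc 0 1) := by
  obtain ⟨-, g₂, -, hg₂, -, hv₂, -⟩ := h
  refine ContinuousOn.congr ?_ hv₂
  rw [← uIcc_of_le zero_le_one]
  exact continuousOn_const.add (intervalIntegral.continuousOn_primitive_interval' hg₂ left_mem_uIcc)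

theorem cexp_mul_fst (h : IsDiracSolution σ₁ σ₂ μ v₁ v₂) {x : ℝ} (hx : x ∈ Icc (0:ℝ) 1) :
    Complex.exp (-(Complex.I * μ) * x) * v₁ x
      = v₁ 0 - ∫ t in (0:ℝ)..x, Complex.exp (-(Complex.I * μ) * t) * (σ₁ t * v₂ t) := by
  obtain ⟨g₁, -, hg₁, -, hv₁, -, hode₁, -⟩ := h
  rw [cexp_mul_eq_add_integral_of_ae_eq (h := fun t => -(σ₁ t * v₂ t)) hg₁ hv₁
    (hode₁.mono fun t ht => by linear_combination ht) hx]
  simp [sub_eq_add_neg, intervalIntegral.integral_neg]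

theorem cexp_mul_snd (h : IsDiracSolution σ₁ σ₂ μ v₁ v₂) {x : ℝ} (hx : x ∈ Icc (0:ℝ) 1) :
    Complex.exp (Complex.I * μ * x) * v₂ x
      = v₂ 0 - ∫ t in (0:ℝ)..x, Complex.exp (Complex.I * μ * t) * (σ₂ t * v₁ t) := by
  obtain ⟨-, g₂, -, hg₂, -, hv₂, -, hode₂⟩ := h
  rw [cexp_mul_eq_add_integral_of_ae_eq (h := fun t => -(σ₂ t * v₁ t)) hg₂ hv₂
    (hode₂.mono fun t ht => by linear_combination ht) hx]
  simp [sub_eq_add_neg, intervalIntegral.integral_neg]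

theorem cexp_mul_fst_eq_neg_volterra (h : IsDiracSolution σ₁ σ₂ μ v₁ v₂) (hv₁ : v₁ 0 = 0) {t : ℝ}
    (ht : t ∈ Icc (0:ℝ) 1) :
    Complex.exp (Complex.I * μ * t) * v₁ t
      = -volterra σ₁ μ (fun s => Complex.exp (Complex.I * μ * s) * v₂ s) t := by
  have hsplit : Complex.exp (Complex.I * μ * t) * v₁ t
      = Complex.exp (2 * Complex.I * μ * t) * (Complex.exp (-(Complex.I * μ) * t) * v₁ t) := by
    rw [← mul_assoc, ← Complex.exp_add]; ring_nf
  rw [hsplit, h.cexp_mul_fst ht, hv₁, zero_sub, mul_neg, ← intervalIntegral.integral_const_mul,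
    volterra]
  congr 1
  refine intervalIntegral.integral_congr fun s _ => ?_
  rw [show Complex.exp (2 * Complex.I * μ * (t - s)) * σ₁ s *
        (Complex.exp (Complex.I * μ * s) * v₂ s)
      = Complex.exp (2 * Complex.I * μ * (t - s)) * Complex.exp (Complex.I * μ * s) *
        (σ₁ s * v₂ s) by ring, ← Complex.exp_add, ← mul_assoc, ← Complex.exp_add]
  ring_nf

theorem cexp_mul_snd_add_K2 (h : IsDiracSolution σ₁ σ₂ μ v₁ v₂)
    (hσ₁ : IntervalIntegrable σ₁ volume 0 1) (hσ₂ : IntervalIntegrable σ₂ volume 0 1)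
    (hv₁ : v₁ 0 = 0) {x : ℝ} (hx : x ∈ Icc (0:ℝ) 1) :
    Complex.exp (Complex.I * μ * x) * v₂ x
      + K2 σ₁ σ₂ μ (fun s => Complex.exp (Complex.I * μ * s) * v₂ s) x
      = Complex.exp (Complex.I * μ) * v₂ 1 := by
  set w := fun s : ℝ => Complex.exp (Complex.I * μ * s) * v₂ s
  have hw : ContinuousOn w (Icc 0 1) := (by fun_prop : Continuous fun s : ℝ =>
    Complex.exp (Complex.I * μ * s)).continuousOn.mul h.continuousOn_snd
  have hu : ContinuousOn (volterra σ₁ μ w) (Icc 0 1) := continuousOn_volterra_of_continuousOn hσ₁ hw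
  have hw_eq : ∀ y ∈ Icc (0:ℝ) 1,
      Complex.exp (Complex.I * μ * y) * v₂ y
        = v₂ 0 + ∫ t in (0:ℝ)..y, σ₂ t * volterra σ₁ μ w t := by
    intro y hy
    rw [h.cexp_mul_snd hy, sub_eq_add_neg, ← intervalIntegral.integral_neg]
    refine congrArg _ (intervalIntegral.integral_congr fun t ht => ?_)
    have htI : t ∈ Icc (0:ℝ) 1 := uIcc_subset_Icc (left_mem_Icc.2 zero_le_one) hy ht
    rw [mul_left_comm, h.cexp_mul_fst_eq_neg_volterra hv₁ htI, mul_neg, neg_neg]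
  have hσu : ∀ {a b : ℝ}, a ∈ Icc (0:ℝ) 1 → b ∈ Icc (0:ℝ) 1 →
      IntervalIntegrable (fun t => σ₂ t * volterra σ₁ μ w t) volume a b :=
    fun ha hb => hσ₂.mul_continuousOn_of_mem zero_le_one hu ha hb
  have hw₁ := hw_eq 1 (right_mem_Icc.2 zero_le_one)
  rw [Complex.ofReal_one, mul_one] at hw₁
  rw [K2_eq_integral_volterra, hw_eq x hx, hw₁,
    ← intervalIntegral.integral_add_adjacent_intervals (hσu (left_mem_Icc.2 zero_le_one) hx)
      (hσu hx (right_mem_Icc.2 zero_le_one))]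
  ring

theorem cexp_mul_snd_add_K2_eq_one (h : IsDiracSolution σ₁ σ₂ μ v₁ v₂)
    (hσ₁ : IntervalIntegrable σ₁ volume 0 1) (hσ₂ : IntervalIntegrable σ₂ volume 0 1)
    (hv₁ : v₁ 0 = 0) (hv₂ : v₂ 1 = 1) {x : ℝ} (hx : x ∈ Icc (0:ℝ) 1) :
    Complex.exp (Complex.I * μ * (x - 1)) * v₂ x
      + K2 σ₁ σ₂ μ (fun s => Complex.exp (Complex.I * μ * (s - 1)) * v₂ s) x = 1 := by
  have hsplit : ∀ s : ℝ, Complex.exp (Complex.I * μ * (s - 1)) * v₂ s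
      = Complex.exp (-(Complex.I * μ)) * (Complex.exp (Complex.I * μ * s) * v₂ s) := fun s => by
    rw [← mul_assoc, ← Complex.exp_add]; ring_nf
  simp_rw [hsplit]
  rw [K2_const_mul, ← mul_add, h.cexp_mul_snd_add_K2 hσ₁ hσ₂ hv₁ hx, hv₂, mul_one,
    ← Complex.exp_add, neg_add_cancel, Complex.exp_zero]

end IsDiracSolution

def gammaMoment (σ₁ σ₂ : ℝ → ℂ) (μ : ℂ) : ℝ := ∫ t in (0:ℝ)..1, ‖σ₂ t‖ * gamma01 σ₁ μ t

def gammaSqMoment (σ₁ σ₂ : ℝ → ℂ) (μ : ℂ) : ℝ := ∫ t in (0:ℝ)..1, ‖σ₂ t‖ * gamma01 σ₁ μ t ^ 2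

section Moments
variable {σ₁ σ₂ : ℝ → ℂ} {μ : ℂ} {r : ℝ}

theorem gamma01_nonneg (x : ℝ) : 0 ≤ gamma01 σ₁ μ x := norm_nonneg _

theorem continuousOn_gamma01 (hσ₁ : IntervalIntegrable σ₁ volume 0 1) :
    ContinuousOn (gamma01 σ₁ μ) (Icc 0 1) := by
  simp_rw [← funext fun x => norm_volterra_eFun (σ := σ₁) (μ := μ) x]
  exact (continuousOn_volterra (by simpa [eFun] using hσ₁)).norm

theorem intervalIntegrable_norm_mul (hσ₂ : IntervalIntegrable σ₂ volume 0 1) {f : ℝ → ℝ}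
    (hf : ContinuousOn f (Icc 0 1)) : IntervalIntegrable (fun t => ‖σ₂ t‖ * f t) volume 0 1 :=
  hσ₂.norm.mul_continuousOn_of_mem zero_le_one hf (left_mem_Icc.2 zero_le_one)
    (right_mem_Icc.2 zero_le_one)

theorem gammaMoment_nonneg : 0 ≤ gammaMoment σ₁ σ₂ μ :=
  intervalIntegral.integral_nonneg zero_le_one fun _ _ =>
    mul_nonneg (norm_nonneg _) (gamma01_nonneg _)

theorem gammaSqMoment_nonneg : 0 ≤ gammaSqMoment σ₁ σ₂ μ :=
  intervalIntegral.integral_nonneg zero_le_one fun _ _ => mul_nonneg (norm_nonneg _) (sq_nonneg _)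

theorem gammaSqMoment_le_gammaT : gammaSqMoment σ₁ σ₂ μ ≤ gammaT σ₁ σ₂ μ :=
  le_add_of_nonneg_right (intervalIntegral.integral_nonneg zero_le_one fun _ _ =>
    mul_nonneg (norm_nonneg _) (sq_nonneg _))

theorem gammaSqMoment_le (hσ₁ : IntervalIntegrable σ₁ volume 0 1)
    (hσ₂ : IntervalIntegrable σ₂ volume 0 1) (hr : 0 ≤ r) (hμ : -r < μ.im) :
    gammaSqMoment σ₁ σ₂ μ ≤ Real.exp (2 * r) * normIntegral σ₁ * gammaMoment σ₁ σ₂ μ := by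
  have hγ := continuousOn_gamma01 (μ := μ) hσ₁
  rw [gammaMoment, ← intervalIntegral.integral_const_mul]
  refine intervalIntegral.integral_mono_on zero_le_one (intervalIntegrable_norm_mul hσ₂ (hγ.pow 2))
    ((intervalIntegrable_norm_mul hσ₂ hγ).const_mul _) fun t ht => ?_
  rw [mul_left_comm, sq]
  exact mul_le_mul_of_nonneg_left (mul_le_mul_of_nonneg_right (gamma01_le hσ₁ hr hμ ht)
    (gamma01_nonneg t)) (norm_nonneg _)

theorem gammaMoment_sq_le (hσ₁ : IntervalIntegrable σ₁ volume 0 1)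
    (hσ₂ : IntervalIntegrable σ₂ volume 0 1) :
    gammaMoment σ₁ σ₂ μ ^ 2 ≤ normIntegral σ₂ * gammaSqMoment σ₁ σ₂ μ := by
  have hγ := continuousOn_gamma01 (μ := μ) hσ₁
  simp only [gammaMoment, gammaSqMoment, normIntegral, intervalIntegral.integral_of_le zero_le_one]
  exact sq_integral_mul_le_integral_mul_integral_mul_sq (ae_of_all _ fun _ => norm_nonneg _)
    hσ₂.norm.1 (intervalIntegrable_norm_mul hσ₂ hγ).1 (intervalIntegrable_norm_mul hσ₂ (hγ.pow 2)).1

theorem gammaMoment_le_eLpNorm_mul_gamma1 {p q : ℝ≥0∞} [p.HolderConjugate q]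
    (hσ₁ : IntervalIntegrable σ₁ volume 0 1) (hσ₂ : MemLp σ₂ p (volume.restrict (Icc (0:ℝ) 1))) :
    gammaMoment σ₁ σ₂ μ
      ≤ (eLpNorm σ₂ p (volume.restrict (Icc (0:ℝ) 1))).toReal * gamma1 σ₁ q μ := by
  have hγ := continuousOn_gamma01 (μ := μ) hσ₁
  obtain ⟨C, hC⟩ := isCompact_Icc.exists_bound_of_continuousOn hγ
  have hγq : MemLp (gamma01 σ₁ μ) q (volume.restrict (Icc (0:ℝ) 1)) :=
    MemLp.of_bound (hγ.aestronglyMeasurable measurableSet_Icc) C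
      ((ae_restrict_iff' measurableSet_Icc).2 (ae_of_all _ hC))
  have := integral_norm_mul_norm_le_eLpNorm_mul_eLpNorm hσ₂ hγq
  simp only [Real.norm_of_nonneg (gamma01_nonneg _)] at this
  rwa [gammaMoment, intervalIntegral.integral_of_le zero_le_one, ← integral_Icc_eq_integral_Ioc]

theorem norm_integral_mul_le_of_le_gamma01 (hσ₁ : IntervalIntegrable σ₁ volume 0 1)
    (hσ₂ : IntervalIntegrable σ₂ volume 0 1) {f : ℝ → ℂ} {a b x : ℝ}
    (hf : ∀ t ∈ Icc (0:ℝ) 1, ‖f t‖ ≤ gamma01 σ₁ μ t * a + b) (hx : x ∈ Icc (0:ℝ) 1) :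
    ‖∫ t in x..1, σ₂ t * f t‖ ≤ a * gammaMoment σ₁ σ₂ μ + b * normIntegral σ₂ := by
  have hγ := continuousOn_gamma01 (μ := μ) hσ₁
  have hint := intervalIntegrable_norm_mul hσ₂ ((hγ.mul continuousOn_const).add continuousOn_const)
    (f := fun t => gamma01 σ₁ μ t * a + b)
  refine (norm_integral_le_integral_of_subinterval hx.1 hx.2 le_rfl hint
    (fun t ht => mul_nonneg (norm_nonneg _) ((norm_nonneg _).trans (hf t (Ioc_subset_Icc_self ht))))
    fun t ht => ?_).trans_eq ?_
  · rw [norm_mul]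
    exact mul_le_mul_of_nonneg_left (hf t ⟨hx.1.trans ht.1.le, ht.2⟩) (norm_nonneg _)
  · have hsplit : ∀ t, ‖σ₂ t‖ * (gamma01 σ₁ μ t * a + b)
        = a * (‖σ₂ t‖ * gamma01 σ₁ μ t) + ‖σ₂ t‖ * b :=
      fun t => by ring
    simp_rw [hsplit]
    rw [intervalIntegral.integral_add ((intervalIntegrable_norm_mul hσ₂ hγ).const_mul a)
      (hσ₂.norm.mul_const b), intervalIntegral.integral_const_mul,
      intervalIntegral.integral_mul_const,
      gammaMoment, normIntegral, mul_comm b]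

theorem integral_norm_mul_gamma01_mul_add (hσ₁ : IntervalIntegrable σ₁ volume 0 1)
    (hσ₂ : IntervalIntegrable σ₂ volume 0 1) (c : ℝ) :
    ∫ t in (0:ℝ)..1, ‖σ₂ t‖ * (gamma01 σ₁ μ t * (gamma01 σ₁ μ t + c))
      = gammaSqMoment σ₁ σ₂ μ + c * gammaMoment σ₁ σ₂ μ := by
  have hγ := continuousOn_gamma01 (μ := μ) hσ₁
  have hsplit : ∀ t, ‖σ₂ t‖ * (gamma01 σ₁ μ t * (gamma01 σ₁ μ t + c))
      = ‖σ₂ t‖ * gamma01 σ₁ μ t ^ 2 + c * (‖σ₂ t‖ * gamma01 σ₁ μ t) := fun t => by ring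
  simp_rw [hsplit]
  rw [intervalIntegral.integral_add
    (intervalIntegrable_norm_mul hσ₂ (f := fun t => gamma01 σ₁ μ t ^ 2) (hγ.pow 2))
    ((intervalIntegrable_norm_mul hσ₂ hγ).const_mul c), intervalIntegral.integral_const_mul,
    gammaSqMoment, gammaMoment]

theorem norm_K2_eFun_le (hσ₁ : IntervalIntegrable σ₁ volume 0 1)
    (hσ₂ : IntervalIntegrable σ₂ volume 0 1) {x : ℝ} (hx : x ∈ Icc (0:ℝ) 1) :
    ‖K2 σ₁ σ₂ μ eFun x‖ ≤ gammaMoment σ₁ σ₂ μ := by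
  rw [K2_eq_integral_volterra]
  simpa using norm_integral_mul_le_of_le_gamma01 (a := 1) (b := 0) (f := volterra σ₁ μ eFun)
    hσ₁ hσ₂ (fun t _ => by rw [norm_volterra_eFun, mul_one, add_zero]) hx

end Moments

def contractionConst (σ₁ σ₂ : ℝ → ℂ) (r : ℝ) : ℝ :=
  1 + normIntegral σ₂ * Real.exp (2 * r) ^ 2 * normIntegral σ₁

section Resolvent
variable {σ₁ σ₂ z : ℝ → ℂ} {μ : ℂ} {r M : ℝ}

theorem one_le_contractionConst : 1 ≤ contractionConst σ₁ σ₂ r := by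
  have := normIntegral_nonneg σ₁
  have := normIntegral_nonneg σ₂
  unfold contractionConst
  have : 0 ≤ normIntegral σ₂ * Real.exp (2 * r) ^ 2 * normIntegral σ₁ := by positivity
  linarith

theorem contractionConst_mul_gammaMoment_le {p q : ℝ≥0∞} [p.HolderConjugate q]
    (hσ₁ : IntervalIntegrable σ₁ volume 0 1) (hσ₂ : MemLp σ₂ p (volume.restrict (Icc (0:ℝ) 1)))
    (hγ₁ : gamma1 σ₁ q μ ≤ 1 / (4 * contractionConst σ₁ σ₂ r *
      ((eLpNorm σ₂ p (volume.restrict (Icc (0:ℝ) 1))).toReal + 1))) :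
    contractionConst σ₁ σ₂ r * gammaMoment σ₁ σ₂ μ ≤ 1 / 4 := by
  set Q := contractionConst σ₁ σ₂ r
  set P := (eLpNorm σ₂ p (volume.restrict (Icc (0:ℝ) 1))).toReal
  have hP : 0 ≤ P := ENNReal.toReal_nonneg
  have hQ : 1 ≤ Q := one_le_contractionConst
  calc Q * gammaMoment σ₁ σ₂ μ ≤ Q * (P * (1 / (4 * Q * (P + 1)))) := by
        gcongr
        exact (gammaMoment_le_eLpNorm_mul_gamma1 hσ₁ hσ₂).trans (by gcongr)
    _ = P / (4 * (P + 1)) := by field_simp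
    _ ≤ 1 / 4 := by rw [div_le_div_iff₀ (by positivity) (by norm_num)]; linarith

theorem sub_one_eq_sub_integral (hσ₁ : IntervalIntegrable σ₁ volume 0 1)
    (hσ₂ : IntervalIntegrable σ₂ volume 0 1) (hz : ContinuousOn z (Icc 0 1))
    (hzK : ∀ x ∈ Icc (0:ℝ) 1, z x + K2 σ₁ σ₂ μ z x = 1) {s t : ℝ} (hs : s ∈ Icc (0:ℝ) 1)
    (ht : t ∈ Icc (0:ℝ) 1) :
    z s - 1 = z t - 1 - ∫ τ in s..t, σ₂ τ * volterra σ₁ μ z τ := by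
  have hσu := fun {a b : ℝ} (ha : a ∈ Icc (0:ℝ) 1) (hb : b ∈ Icc (0:ℝ) 1) =>
    hσ₂.mul_continuousOn_of_mem zero_le_one
      (continuousOn_volterra_of_continuousOn (μ := μ) hσ₁ hz) ha hb
  have hs' := hzK s hs
  rw [K2_eq_integral_volterra, ← intervalIntegral.integral_add_adjacent_intervals (hσu hs ht)
    (hσu ht (right_mem_Icc.2 zero_le_one)), ← K2_eq_integral_volterra] at hs'
  linear_combination hs' - hzK t ht

theorem volterra_eq_add_volterra_sub_one (hσ₁ : IntervalIntegrable σ₁ volume 0 1)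
    (hz : ContinuousOn z (Icc 0 1)) {t : ℝ} (ht : t ∈ Icc (0:ℝ) 1) :
    volterra σ₁ μ z t = volterra σ₁ μ eFun t + volterra σ₁ μ (fun s => z s - 1) t := by
  rw [volterra, volterra, volterra, ← intervalIntegral.integral_add
    (intervalIntegrable_volterra_integrand (φ := eFun) hσ₁ continuousOn_const ht t)
    (intervalIntegrable_volterra_integrand (φ := fun s => z s - 1) hσ₁
      (hz.sub continuousOn_const) ht t)]
  exact intervalIntegral.integral_congr fun s _ => by simp only [eFun]; ring

theorem volterra_sub_one_eq (hσ₁ : IntervalIntegrable σ₁ volume 0 1)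
    (hσ₂ : IntervalIntegrable σ₂ volume 0 1) (hz : ContinuousOn z (Icc 0 1))
    (hzK : ∀ x ∈ Icc (0:ℝ) 1, z x + K2 σ₁ σ₂ μ z x = 1) {t : ℝ} (ht : t ∈ Icc (0:ℝ) 1) :
    volterra σ₁ μ (fun s => z s - 1) t = (z t - 1) * volterra σ₁ μ eFun t
      - ∫ τ in (0:ℝ)..t, Complex.exp (2 * Complex.I * μ * (t - τ)) *
          volterra σ₁ μ eFun τ * (σ₂ τ * volterra σ₁ μ z τ) := by
  have hσu := hσ₂.mul_continuousOn_of_mem zero_le_one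
    (continuousOn_volterra_of_continuousOn (μ := μ) hσ₁ hz) (left_mem_Icc.2 zero_le_one) ht
  have hker := intervalIntegrable_volterra_integrand (φ := eFun) (μ := μ) hσ₁
    continuousOn_const ht t
  have hprim : ContinuousOn (fun s => ∫ τ in s..t, σ₂ τ * volterra σ₁ μ z τ) (uIcc 0 t) :=
    intervalIntegral.continuousOn_primitive_interval_left (by
      rw [uIcc_of_le ht.1]; exact (intervalIntegrable_iff_integrableOn_Icc_of_le ht.1).mp hσu)
  rw [← volterra_integral_eq hσ₁ ht hσu, volterra, volterra, volterra,
    ← intervalIntegral.integral_const_mul, ← intervalIntegral.integral_sub (hker.const_mul _)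
      ((hker.mul_continuousOn hprim).congr
        fun s _ => by simp only [eFun, mul_one])]
  refine intervalIntegral.integral_congr fun s hs => ?_
  rw [sub_one_eq_sub_integral hσ₁ hσ₂ hz hzK
    (uIcc_subset_Icc (left_mem_Icc.2 zero_le_one) ht hs) ht]
  simp only [eFun]
  ring

theorem norm_volterra_le_gamma01_add (hσ₁ : IntervalIntegrable σ₁ volume 0 1) (hr : 0 ≤ r)
    (hμ : -r < μ.im) (hz : ContinuousOn z (Icc 0 1)) (hM : ∀ x ∈ Icc (0:ℝ) 1, ‖z x - 1‖ ≤ M)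
    {t : ℝ} (ht : t ∈ Icc (0:ℝ) 1) :
    ‖volterra σ₁ μ z t‖ ≤ gamma01 σ₁ μ t + Real.exp (2 * r) * normIntegral σ₁ * M := by
  rw [volterra_eq_add_volterra_sub_one hσ₁ hz ht, ← norm_volterra_eFun]
  exact (norm_add_le _ _).trans (add_le_add le_rfl (norm_volterra_le hσ₁ hr hμ ht
    ((norm_nonneg _).trans (hM 0 (left_mem_Icc.2 zero_le_one)))
    fun s hs => hM s ⟨hs.1.le, hs.2.trans ht.2⟩))

theorem norm_volterra_sub_one_le (hσ₁ : IntervalIntegrable σ₁ volume 0 1)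
    (hσ₂ : IntervalIntegrable σ₂ volume 0 1) (hr : 0 ≤ r) (hμ : -r < μ.im)
    (hz : ContinuousOn z (Icc 0 1)) (hzK : ∀ x ∈ Icc (0:ℝ) 1, z x + K2 σ₁ σ₂ μ z x = 1)
    (hM : ∀ x ∈ Icc (0:ℝ) 1, ‖z x - 1‖ ≤ M) {t : ℝ} (ht : t ∈ Icc (0:ℝ) 1) :
    ‖volterra σ₁ μ (fun s => z s - 1) t‖ ≤ gamma01 σ₁ μ t * M
      + Real.exp (2 * r) * (gammaSqMoment σ₁ σ₂ μ
        + Real.exp (2 * r) * normIntegral σ₁ * M * gammaMoment σ₁ σ₂ μ) := by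
  set E := Real.exp (2 * r)
  set c := E * normIntegral σ₁ * M
  have hγ := continuousOn_gamma01 (μ := μ) hσ₁
  rw [volterra_sub_one_eq hσ₁ hσ₂ hz hzK ht, ← integral_norm_mul_gamma01_mul_add hσ₁ hσ₂,
    ← intervalIntegral.integral_const_mul]
  refine (norm_sub_le _ _).trans (add_le_add ?_ ?_)
  · rw [norm_mul, norm_volterra_eFun, mul_comm]
    exact mul_le_mul_of_nonneg_left (hM t ht) (gamma01_nonneg t)
  refine norm_integral_le_integral_of_subinterval le_rfl ht.1 ht.2
    ((intervalIntegrable_norm_mul hσ₂ (hγ.mul (hγ.add continuousOn_const))).const_mul E)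
    (fun τ hτ => ?_) fun τ hτ => ?_
  · have := (norm_nonneg _).trans (norm_volterra_le_gamma01_add hσ₁ hr hμ hz hM
      (Ioc_subset_Icc_self hτ))
    have := gamma01_nonneg (σ₁ := σ₁) (μ := μ) τ
    positivity
  · have hτI : τ ∈ Icc (0:ℝ) 1 := ⟨hτ.1.le, hτ.2.trans ht.2⟩
    rw [norm_mul, norm_mul, norm_mul, norm_volterra_eFun]
    calc ‖Complex.exp (2 * Complex.I * μ * (t - τ))‖ * gamma01 σ₁ μ τ *
          (‖σ₂ τ‖ * ‖volterra σ₁ μ z τ‖)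
        ≤ E * gamma01 σ₁ μ τ * (‖σ₂ τ‖ * (gamma01 σ₁ μ τ + c)) :=
          mul_le_mul (mul_le_mul_of_nonneg_right
              (norm_cexp_two_mul_I_mul_le hr hμ hτ.1.le hτ.2 ht.2) (gamma01_nonneg τ))
            (mul_le_mul_of_nonneg_left (norm_volterra_le_gamma01_add hσ₁ hr hμ hz hM hτI)
              (norm_nonneg _))
            (by positivity) (mul_nonneg (Real.exp_pos _).le (gamma01_nonneg τ))
      _ = E * (‖σ₂ τ‖ * (gamma01 σ₁ μ τ * (gamma01 σ₁ μ τ + c))) := by ring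

theorem norm_sub_one_le (hσ₁ : IntervalIntegrable σ₁ volume 0 1)
    (hσ₂ : IntervalIntegrable σ₂ volume 0 1) (hr : 0 ≤ r) (hμ : -r < μ.im)
    (hz : ContinuousOn z (Icc 0 1)) (hzK : ∀ x ∈ Icc (0:ℝ) 1, z x + K2 σ₁ σ₂ μ z x = 1)
    (hM : ∀ x ∈ Icc (0:ℝ) 1, ‖z x - 1‖ ≤ M) {x : ℝ} (hx : x ∈ Icc (0:ℝ) 1) :
    ‖z x - 1‖ ≤ (1 + M) * gammaMoment σ₁ σ₂ μ
      + Real.exp (2 * r) * (gammaSqMoment σ₁ σ₂ μ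
        + Real.exp (2 * r) * normIntegral σ₁ * M * gammaMoment σ₁ σ₂ μ) * normIntegral σ₂ := by
  rw [show z x - 1 = -K2 σ₁ σ₂ μ z x by linear_combination hzK x hx, norm_neg,
    K2_eq_integral_volterra]
  refine norm_integral_mul_le_of_le_gamma01 hσ₁ hσ₂ (fun t ht => ?_) hx
  rw [volterra_eq_add_volterra_sub_one hσ₁ hz ht]
  refine (norm_add_le _ _).trans ((add_le_add (norm_volterra_eFun t).le
    (norm_volterra_sub_one_le hσ₁ hσ₂ hr hμ hz hzK hM ht)).trans_eq ?_)
  ring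

theorem norm_K2_sub_one_le (hσ₁ : IntervalIntegrable σ₁ volume 0 1)
    (hσ₂ : IntervalIntegrable σ₂ volume 0 1) (hr : 0 ≤ r) (hμ : -r < μ.im)
    (hz : ContinuousOn z (Icc 0 1)) (hzK : ∀ x ∈ Icc (0:ℝ) 1, z x + K2 σ₁ σ₂ μ z x = 1)
    (hM : ∀ x ∈ Icc (0:ℝ) 1, ‖z x - 1‖ ≤ M) :
    ‖K2 σ₁ σ₂ μ (fun s => z s - 1) 0‖ ≤ M * gammaMoment σ₁ σ₂ μ
      + Real.exp (2 * r) * (gammaSqMoment σ₁ σ₂ μ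
        + Real.exp (2 * r) * normIntegral σ₁ * M * gammaMoment σ₁ σ₂ μ) * normIntegral σ₂ :=
  norm_integral_mul_le_of_le_gamma01 hσ₁ hσ₂
    (fun _ ht => norm_volterra_sub_one_le hσ₁ hσ₂ hr hμ hz hzK hM ht) (left_mem_Icc.2 zero_le_one)

theorem norm_sub_one_le_of_small (hσ₁ : IntervalIntegrable σ₁ volume 0 1)
    (hσ₂ : IntervalIntegrable σ₂ volume 0 1) (hr : 0 ≤ r) (hμ : -r < μ.im)
    (hz : ContinuousOn z (Icc 0 1)) (hzK : ∀ x ∈ Icc (0:ℝ) 1, z x + K2 σ₁ σ₂ μ z x = 1)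
    (hsmall : contractionConst σ₁ σ₂ r * gammaMoment σ₁ σ₂ μ ≤ 1 / 4) {x : ℝ}
    (hx : x ∈ Icc (0:ℝ) 1) :
    ‖z x - 1‖ ≤ 2 * contractionConst σ₁ σ₂ r * gammaMoment σ₁ σ₂ μ := by
  obtain ⟨x₀, hx₀, hmax⟩ := isCompact_Icc.exists_isMaxOn (nonempty_Icc.2 zero_le_one)
    (hz.sub continuousOn_const).norm
  have hM : ∀ y ∈ Icc (0:ℝ) 1, ‖z y - 1‖ ≤ ‖z x₀ - 1‖ := fun y hy => hmax hy
  have hbound := norm_sub_one_le hσ₁ hσ₂ hr hμ hz hzK hM hx₀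
  have hΓ := gammaSqMoment_le hσ₁ hσ₂ hr hμ
  have hA := gammaMoment_nonneg (σ₁ := σ₁) (σ₂ := σ₂) (μ := μ)
  have hS₂ := normIntegral_nonneg σ₂
  have hE := (Real.exp_pos (2 * r)).le
  have hM₀ := norm_nonneg (z x₀ - 1)
  have hQ : ‖z x₀ - 1‖ ≤ (1 + ‖z x₀ - 1‖) * (contractionConst σ₁ σ₂ r * gammaMoment σ₁ σ₂ μ) := by
    refine hbound.trans ?_
    unfold contractionConst
    nlinarith [mul_le_mul_of_nonneg_left hΓ (mul_nonneg hE hS₂)]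
  have := mul_le_mul_of_nonneg_left hsmall hM₀
  have := one_le_contractionConst (σ₁ := σ₁) (σ₂ := σ₂) (r := r)
  nlinarith [hM x hx]

theorem K2_eq_K2_eFun_add_K2_sub_one (hσ₁ : IntervalIntegrable σ₁ volume 0 1)
    (hσ₂ : IntervalIntegrable σ₂ volume 0 1) (hz : ContinuousOn z (Icc 0 1)) :
    K2 σ₁ σ₂ μ z 0 = K2 σ₁ σ₂ μ eFun 0 + K2 σ₁ σ₂ μ (fun s => z s - 1) 0 := by
  have hσu := fun {φ : ℝ → ℂ} (hφ : ContinuousOn φ (Icc 0 1)) =>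
    hσ₂.mul_continuousOn_of_mem zero_le_one (continuousOn_volterra_of_continuousOn (μ := μ) hσ₁ hφ)
      (left_mem_Icc.2 zero_le_one) (right_mem_Icc.2 zero_le_one)
  rw [K2_eq_integral_volterra, K2_eq_integral_volterra, K2_eq_integral_volterra,
    ← intervalIntegral.integral_add (hσu (φ := eFun) continuousOn_const)
      (hσu (φ := fun s => z s - 1) (hz.sub continuousOn_const))]
  refine intervalIntegral.integral_congr fun t ht => ?_
  rw [volterra_eq_add_volterra_sub_one hσ₁ hz (by rwa [uIcc_of_le zero_le_one] at ht), mul_add]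

theorem norm_inv_sub_one_sub_K2_le (hσ₁ : IntervalIntegrable σ₁ volume 0 1)
    (hσ₂ : IntervalIntegrable σ₂ volume 0 1) (hr : 0 ≤ r) (hμ : -r < μ.im)
    (hz : ContinuousOn z (Icc 0 1)) (hzK : ∀ x ∈ Icc (0:ℝ) 1, z x + K2 σ₁ σ₂ μ z x = 1)
    (hsmall : contractionConst σ₁ σ₂ r * gammaMoment σ₁ σ₂ μ ≤ 1 / 4) :
    z 0 ≠ 0 ∧ ‖1 / z 0 - 1 - K2 σ₁ σ₂ μ eFun 0‖ ≤ 2 * normIntegral σ₂ *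
      (2 * contractionConst σ₁ σ₂ r * (contractionConst σ₁ σ₂ r + 1) + Real.exp (2 * r)) *
        gammaSqMoment σ₁ σ₂ μ := by
  set Q := contractionConst σ₁ σ₂ r
  set A := gammaMoment σ₁ σ₂ μ
  set k := K2 σ₁ σ₂ μ eFun 0
  set W := K2 σ₁ σ₂ μ (fun s => z s - 1) 0
  have mem0 : (0:ℝ) ∈ Icc (0:ℝ) 1 := left_mem_Icc.2 zero_le_one
  have hM := fun x (hx : x ∈ Icc (0:ℝ) 1) => norm_sub_one_le_of_small hσ₁ hσ₂ hr hμ hz hzK hsmall hx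
  have hz0 : 1 / 2 ≤ ‖z 0‖ := by
    have := norm_sub_norm_le (1 : ℂ) (1 - z 0)
    rw [norm_one, sub_sub_cancel, norm_sub_rev] at this
    linarith [hM 0 mem0]
  have hz0ne : z 0 ≠ 0 := norm_pos_iff.1 (by linarith)
  have hk : ‖k‖ ≤ A := norm_K2_eFun_le hσ₁ hσ₂ mem0
  have hW := norm_K2_sub_one_le hσ₁ hσ₂ hr hμ hz hzK hM
  have hid : 1 / z 0 - 1 - k = (W - (z 0 - 1) * k) / z 0 := one_div_sub_one_sub_eq hz0ne
    (by rw [← K2_eq_K2_eFun_add_K2_sub_one hσ₁ hσ₂ hz]; exact hzK 0 mem0)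
  refine ⟨hz0ne, ?_⟩
  have hnum : ‖W - (z 0 - 1) * k‖ ≤ (Q + 1) * (2 * Q * A) * A
      + normIntegral σ₂ * Real.exp (2 * r) * gammaSqMoment σ₁ σ₂ μ := by
    have hρk : ‖(z 0 - 1) * k‖ ≤ 2 * Q * A * A := by
      rw [norm_mul]
      exact mul_le_mul (hM 0 mem0) hk (norm_nonneg _)
        (by linarith [hM 0 mem0, norm_nonneg (z 0 - 1)])
    refine (norm_sub_le _ _).trans ((add_le_add hW hρk).trans_eq ?_)
    simp only [Q, contractionConst]
    ring
  have hA := gammaMoment_sq_le (μ := μ) hσ₁ hσ₂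
  have hQ := one_le_contractionConst (σ₁ := σ₁) (σ₂ := σ₂) (r := r)
  rw [hid, norm_div, div_le_iff₀ (by linarith)]
  nlinarith [mul_le_mul_of_nonneg_left hA (by positivity : (0:ℝ) ≤ 2 * Q * (Q + 1)),
    norm_nonneg (W - (z 0 - 1) * k), normIntegral_nonneg σ₂, (Real.exp_pos (2 * r)).le,
    gammaSqMoment_nonneg (σ₁ := σ₁) (σ₂ := σ₂) (μ := μ)]

end Resolvent

theorem stmt12_general
    (p q : ℝ≥0∞) (hp1 : 1 ≤ p) (hpq : 1/p + 1/q = 1)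
    (σ₁ σ₂ : ℝ → ℂ)
    (hσ₁ : MemLp σ₁ p (volume.restrict (Icc (0:ℝ) 1)))
    (hσ₂ : MemLp σ₂ p (volume.restrict (Icc (0:ℝ) 1)))
    (r : ℝ) (hr : 0 ≤ r) :
    ∃ ε₀ > 0, ∃ C > 0, ∀ μ : ℂ, -r < μ.im →
      gamma1 σ₁ q μ ≤ ε₀ → gamma2 σ₂ q μ ≤ ε₀ →
      ∀ v₁ v₂ : ℝ → ℂ, IsDiracSolution σ₁ σ₂ μ v₁ v₂ → v₁ 0 = 0 → v₂ 1 = 1 →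
        v₂ 0 ≠ 0
        ∧ ‖Complex.exp (Complex.I * μ) / v₂ 0 - 1 - K2 σ₁ σ₂ μ eFun 0‖
            ≤ C * gammaT σ₁ σ₂ μ := by
  have : p.HolderConjugate q := ENNReal.holderConjugate_iff.2 (by simpa only [one_div] using hpq)
  have hσ₁i := (intervalIntegrable_iff_integrableOn_Icc_of_le zero_le_one).2 (hσ₁.integrable hp1)
  have hσ₂i := (intervalIntegrable_iff_integrableOn_Icc_of_le zero_le_one).2 (hσ₂.integrable hp1)
  set Q := contractionConst σ₁ σ₂ r
  set P := (eLpNorm σ₂ p (volume.restrict (Icc (0:ℝ) 1))).toReal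
  set C₀ := 2 * normIntegral σ₂ * (2 * Q * (Q + 1) + Real.exp (2 * r))
  have hQ : 1 ≤ Q := one_le_contractionConst
  have hC₀ : 0 ≤ C₀ := by have := normIntegral_nonneg σ₂; positivity
  refine ⟨1 / (4 * Q * (P + 1)), by positivity, C₀ + 1, by positivity, ?_⟩
  intro μ hμ hγ₁ _ v₁ v₂ hv hv₁ hv₂
  set z := fun s : ℝ => Complex.exp (Complex.I * μ * (s - 1)) * v₂ s
  have hz : ContinuousOn z (Icc 0 1) := (by fun_prop : Continuous fun s : ℝ =>
    Complex.exp (Complex.I * μ * (s - 1))).continuousOn.mul hv.continuousOn_snd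
  obtain ⟨hz0, hbound⟩ := norm_inv_sub_one_sub_K2_le hσ₁i hσ₂i hr hμ hz
    (fun x hx => hv.cexp_mul_snd_add_K2_eq_one hσ₁i hσ₂i hv₁ hv₂ hx)
    (contractionConst_mul_gammaMoment_le hσ₁i hσ₂ hγ₁)
  have hv₂0 : v₂ 0 = Complex.exp (Complex.I * μ) * z 0 := by
    simp [z, ← mul_assoc, ← Complex.exp_add]
  refine ⟨hv₂0 ▸ mul_ne_zero (Complex.exp_ne_zero _) hz0, ?_⟩
  rw [hv₂0, div_mul_eq_div_div, div_self (Complex.exp_ne_zero _)]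
  exact hbound.trans (mul_le_mul (le_add_of_nonneg_right zero_le_one) gammaSqMoment_le_gammaT
    gammaSqMoment_nonneg (by linarith))

/-- non-vanishing of `v₂(0)` and asymptotics of `e^{iμ}/v₂(0)`. -/
theorem stmt12
    (p q : ℝ≥0∞) (hp1 : 1 ≤ p) (hp2 : p < 2) (hpq : 1/p + 1/q = 1)
    (σ₁ σ₂ : ℝ → ℂ) (hσ₁m : Measurable σ₁) (hσ₂m : Measurable σ₂)
    (hσ₁ : MemLp σ₁ p (volume.restrict (Icc (0:ℝ) 1)))
    (hσ₂ : MemLp σ₂ p (volume.restrict (Icc (0:ℝ) 1)))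
    (r : ℝ) (hr : 0 ≤ r) :
    ∃ ε₀ > 0, ∃ C > 0, ∀ μ : ℂ, -r < μ.im →
      gamma1 σ₁ q μ ≤ ε₀ → gamma2 σ₂ q μ ≤ ε₀ →
      ∀ v₁ v₂ : ℝ → ℂ, IsDiracSolution σ₁ σ₂ μ v₁ v₂ → v₁ 0 = 0 → v₂ 1 = 1 →
        v₂ 0 ≠ 0
        ∧ ‖Complex.exp (Complex.I * μ) / v₂ 0 - 1 - K2 σ₁ σ₂ μ eFun 0‖
            ≤ C * gammaT σ₁ σ₂ μ :=
  stmt12_general p q hp1 hpq σ₁ σ₂ hσ₁ hσ₂ r hr
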